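/- Let (X,d_X) and (Y,d_Y) be pseudometric spaces with diam(X) ≤ C_X and diam(Y) ≤ C_Y, let p ≥ 1, i ∈ {1,2}, and suppose the GTT penalty C satisfies C^p ≥ C_i^p (where C_i is the GOSPA_i penalty with its defining lower bound). Then for any attributed simple graphs ([m],v,e) and ([n],w,f): d_{G,A}(([m],v,e),([n],w,f)) ≥ d_{G,R_i}(([m],v,e),([n],w,f)). -/

import Mathlib

open Finset

section GraphMetricDefs

variable {X Y : Type*}

/-- Two attributed graphs `([m],v,e)` and `([n],w,f)` are equal (i.e. agree up to
relabeling of the vertices). -/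
def GraphEqual {m n : ℕ} (v : Fin m → X) (e : Fin m → Fin m → Y)
    (w : Fin n → X) (f : Fin n → Fin n → Y) : Prop :=
  ∃ h : m = n, ∃ π : Equiv.Perm (Fin n),
    (∀ i : Fin m, v i = w (π (Fin.cast h i))) ∧
    (∀ i i' : Fin m, e i i' = f (π (Fin.cast h i)) (π (Fin.cast h i')))

/-- `e` is a valid edge-attribute map: symmetric with no-edge value `y₀` on the diagonal. -/
def IsGraph {m : ℕ} (y₀ : Y) (e : Fin m → Fin m → Y) : Prop :=
  (∀ i i', e i i' = e i' i) ∧ ∀ i, e i i = y₀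

variable [PseudoMetricSpace X] [PseudoMetricSpace Y]

/-- The expression in brackets (raised to power `1/p`) in the definition of the GTT
distance, for a given subset `I ⊆ [m]` and a permutation `π ∈ S_n`. -/
noncomputable def gttVal (y₀ : Y) (p C : ℝ) {m n : ℕ} (hmn : m ≤ n)
    (v : Fin m → X) (e : Fin m → Fin m → Y)
    (w : Fin n → X) (f : Fin n → Fin n → Y)
    (I : Finset (Fin m)) (π : Equiv.Perm (Fin n)) : ℝ :=
  (((m : ℝ) + (n : ℝ) - 2 * (I.card : ℝ)) * C ^ p
    + ∑ i ∈ I, dist (v i) (w (π (Fin.castLE hmn i))) ^ p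
    + (1/2) * ∑ i ∈ I, ∑ i' ∈ I,
        dist (e i i') (f (π (Fin.castLE hmn i)) (π (Fin.castLE hmn i'))) ^ p
    + (1/2) * ∑ q ∈ ((univ : Finset (Fin m × Fin m)) \ I ×ˢ I),
        dist (e q.1 q.2) y₀ ^ p
    + (1/2) * ∑ q ∈ ((univ : Finset (Fin n × Fin n)) \
        ((I.image fun i => π (Fin.castLE hmn i)) ×ˢ (I.image fun i => π (Fin.castLE hmn i)))),
        dist y₀ (f q.1 q.2) ^ p) ^ (1/p)

/-- The graph transport-transform (GTT) distance of order `p` with vertex penalty `C`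
between `([m],v,e)` and `([n],w,f)`, for `m ≤ n`. -/
noncomputable def dGTT (y₀ : Y) (p C : ℝ) {m n : ℕ} (hmn : m ≤ n)
    (v : Fin m → X) (e : Fin m → Fin m → Y)
    (w : Fin n → X) (f : Fin n → Fin n → Y) : ℝ :=
  Finset.inf' Finset.univ Finset.univ_nonempty
    fun Iπ : Finset (Fin m) × Equiv.Perm (Fin n) => gttVal y₀ p C hmn v e w f Iπ.1 Iπ.2

/-- The GTT distance between two graphs of arbitrary sizes (extended by symmetry). -/
noncomputable def dGTT' (y₀ : Y) (p C : ℝ) {m n : ℕ}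
    (v : Fin m → X) (e : Fin m → Fin m → Y)
    (w : Fin n → X) (f : Fin n → Fin n → Y) : ℝ :=
  if h : m ≤ n then dGTT y₀ p C h v e w f else dGTT y₀ p C (le_of_not_ge h) w f v e

/-- The GOSPA1 distance of order `p` with penalties `C₁` (vertex) and `CY` (edge bound)
between `([m],v,e)` and `([n],w,f)`, for `m ≤ n`. -/
noncomputable def dGOSPA1 (p C₁ CY : ℝ) {m n : ℕ} (hmn : m ≤ n)
    (v : Fin m → X) (e : Fin m → Fin m → Y)
    (w : Fin n → X) (f : Fin n → Fin n → Y) : ℝ :=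
  ((n : ℝ) ^ (1/p))⁻¹ *
    Finset.inf' Finset.univ Finset.univ_nonempty fun π : Equiv.Perm (Fin n) =>
      (((n : ℝ) - (m : ℝ)) * C₁ ^ p
        + ∑ i : Fin m, dist (v i) (w (π (Fin.castLE hmn i))) ^ p
        + (1/2) * ((n : ℝ) - 1)⁻¹ *
            ∑ i : Fin m, ((∑ i' : Fin m,
                dist (e i i') (f (π (Fin.castLE hmn i)) (π (Fin.castLE hmn i'))) ^ p)
              + ((n : ℝ) - (m : ℝ)) * CY ^ p)) ^ (1/p)

/-- The GOSPA1 distance between two graphs of arbitrary sizes (extended by symmetry). -/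
noncomputable def dGOSPA1' (p C₁ CY : ℝ) {m n : ℕ}
    (v : Fin m → X) (e : Fin m → Fin m → Y)
    (w : Fin n → X) (f : Fin n → Fin n → Y) : ℝ :=
  if h : m ≤ n then dGOSPA1 p C₁ CY h v e w f
  else dGOSPA1 p C₁ CY (le_of_not_ge h) w f v e

/-- The GOSPA2 distance of order `p` with penalty `C₂`
between `([m],v,e)` and `([n],w,f)`, for `m ≤ n`. -/
noncomputable def dGOSPA2 (y₀ : Y) (p C₂ : ℝ) {m n : ℕ} (hmn : m ≤ n)
    (v : Fin m → X) (e : Fin m → Fin m → Y)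
    (w : Fin n → X) (f : Fin n → Fin n → Y) : ℝ :=
  ((n : ℝ) ^ (1/p))⁻¹ *
    Finset.inf' Finset.univ Finset.univ_nonempty fun π : Equiv.Perm (Fin n) =>
      (((n : ℝ) - (m : ℝ)) * C₂ ^ p
        + ∑ i : Fin m, dist (v i) (w (π (Fin.castLE hmn i))) ^ p
        + (1/2) * ((n : ℝ) - 1)⁻¹ *
            ∑ i : Fin n, ∑ i' : Fin n,
              (if h : (i : ℕ) < m ∧ (i' : ℕ) < m
               then dist (e ⟨i.1, h.1⟩ ⟨i'.1, h.2⟩) (f (π i) (π i')) ^ p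
               else dist y₀ (f (π i) (π i')) ^ p)) ^ (1/p)

/-- The GOSPA2 distance between two graphs of arbitrary sizes (extended by symmetry). -/
noncomputable def dGOSPA2' (y₀ : Y) (p C₂ : ℝ) {m n : ℕ}
    (v : Fin m → X) (e : Fin m → Fin m → Y)
    (w : Fin n → X) (f : Fin n → Fin n → Y) : ℝ :=
  if h : m ≤ n then dGOSPA2 y₀ p C₂ h v e w f
  else dGOSPA2 y₀ p C₂ (le_of_not_ge h) w f v e

end GraphMetricDefs

/-!
Take a GTT assignment `(I, π)` and give GOSPA the same permutation `π`. In GOSPA every vertex of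
`[m] \ I` costs at most `CX^p` and every edge outside `I × I` at most `CY^p`, and the factor
`(n - 1)⁻¹` is at most `1`; so the GOSPA cost is at most the matched GTT terms plus a penalty that
an elementary counting inequality bounds by `n (m + n - 2|I|) C^p`. Hence the GOSPA cost is at most
`n` times the GTT cost, which is the claim after dividing by `n` and taking `p`-th roots. For
GOSPA2 the smaller graph is padded with isolated vertices; the diagonal then contributes nothing,
since both graphs carry the no-edge attribute there.
-/

section SumSplitting

variable {ι R : Type*} [CommRing R]

lemma natCast_card_offDiag (s : Finset ι) : (#s.offDiag : R) = #s * (#s - 1) := by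
  rw [offDiag_card, Nat.cast_sub (Nat.le_mul_self _)]
  push_cast; ring

lemma sum_sum_eq_sum_offDiag {s : Finset ι} {g : ι → ι → R} (hg : ∀ i ∈ s, g i i = 0) :
    ∑ i ∈ s, ∑ j ∈ s, g i j = ∑ q ∈ s.offDiag, g q.1 q.2 := by
  rw [← sum_product', eq_comm]
  refine sum_subset (fun q hq => by grind) fun ⟨i, j⟩ hq hq' => ?_
  obtain rfl : i = j := by grind
  exact hg i (mem_product.1 hq).1

variable [DecidableEq ι] [PartialOrder R] [IsOrderedRing R]

lemma sum_le_sum_add_card_sub_mul {s t : Finset ι} {g : ι → R} {M : R}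
    (hst : s ⊆ t) (hg : ∀ i ∈ t \ s, g i ≤ M) :
    ∑ i ∈ t, g i ≤ ∑ i ∈ s, g i + ((#t : R) - #s) * M := by
  rw [← sum_sdiff hst, add_comm, ← Nat.cast_sub (card_le_card hst), ← card_sdiff_of_subset hst,
    ← nsmul_eq_mul]
  gcongr
  exact sum_le_card_nsmul _ _ _ hg

lemma sum_sum_le_sum_sum_add {s t : Finset ι} {g : ι → ι → R} {M : R}
    (hst : s ⊆ t) (hg : ∀ i ∈ t, ∀ j ∈ t, g i j ≤ M) :
    ∑ i ∈ t, ∑ j ∈ t, g i j ≤ ∑ i ∈ s, ∑ j ∈ s, g i j + ((#t : R) * #t - #s * #s) * M := by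
  have h := sum_le_sum_add_card_sub_mul (g := fun q : ι × ι => g q.1 q.2) (M := M)
    (product_subset_product hst hst) fun q hq => by
      simp only [mem_sdiff, mem_product] at hq
      exact hg _ hq.1.1 _ hq.1.2
  simpa only [sum_product', card_product, Nat.cast_mul] using h

lemma sum_sum_le_sum_sum_add_of_diag {s t : Finset ι} {g : ι → ι → R} {M : R} (hst : s ⊆ t)
    (hdiag : ∀ i ∈ t, g i i = 0) (hg : ∀ i ∈ t, ∀ j ∈ t, g i j ≤ M) :
    ∑ i ∈ t, ∑ j ∈ t, g i j
      ≤ ∑ i ∈ s, ∑ j ∈ s, g i j + ((#t : R) * (#t - 1) - #s * (#s - 1)) * M := by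
  rw [sum_sum_eq_sum_offDiag hdiag, sum_sum_eq_sum_offDiag fun i hi => hdiag i (hst hi),
    ← natCast_card_offDiag, ← natCast_card_offDiag]
  refine sum_le_sum_add_card_sub_mul (offDiag_mono hst) fun q hq => ?_
  have hq := mem_offDiag.1 (mem_sdiff.1 hq).1
  exact hg _ hq.1 _ hq.2.1

end SumSplitting

lemma natCast_sub_one_inv_le_one (n : ℕ) : ((n : ℝ) - 1)⁻¹ ≤ 1 := by
  rw [inv_le_one_iff₀, sub_nonpos, le_sub_iff_add_le]
  norm_cast
  omega

lemma natCast_sub_mul_sub_sub_one_nonneg (k n : ℕ) : 0 ≤ ((n : ℝ) - k) * ((n : ℝ) - k - 1) := by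
  have h : (0 : ℤ) ≤ ((n : ℤ) - k) * ((n : ℤ) - k - 1) := by
    rcases le_or_gt ((n : ℤ) - k) 0 with h | h <;> nlinarith
  exact_mod_cast h

-- Both are linear combinations of products of the hypotheses and of `(n - k) (n - k - 1) ≥ 0`,
-- which holds because `n - k` is an integer.
lemma gospa1_penalty_le {a b c C₁ : ℝ} {k m n : ℕ} (hkm : k ≤ m) (hmn : m ≤ n) (hn : 0 < n)
    (hb : 0 ≤ b) (hc : 0 ≤ c) (hC₁ : b + 1/2 * c ≤ C₁) (ha : C₁ ≤ a) :
    (n - m) * C₁ + (m - k) * b + 1/2 * (m * n - k * k) * c ≤ n * ((m + n - 2 * k) * a) := by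
  have hkm : 0 ≤ (m : ℝ) - k := sub_nonneg.2 (by exact_mod_cast hkm)
  have hmn : 0 ≤ (n : ℝ) - m := sub_nonneg.2 (by exact_mod_cast hmn)
  have hn₁ : 0 ≤ (n : ℝ) - 1 := sub_nonneg.2 (by exact_mod_cast hn)
  have hn₀ : 0 ≤ (n : ℝ) := n.cast_nonneg
  have hslack : 0 ≤ a - b - 1/2 * c := by linarith
  linarith [mul_nonneg hmn (sub_nonneg.2 ha), mul_nonneg (mul_nonneg hn₁ hmn) hslack,
    mul_nonneg (mul_nonneg hkm hn₀) hslack, mul_nonneg (mul_nonneg hkm hn₁) hb,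
    mul_nonneg (mul_nonneg hkm hn₀) hb, mul_nonneg (mul_nonneg hmn hn₁) hb,
    mul_nonneg hc (natCast_sub_mul_sub_sub_one_nonneg k n), mul_nonneg hc hkm]

lemma gospa2_penalty_le {a b c C₂ : ℝ} {k m n : ℕ} (hkm : k ≤ m) (hmn : m ≤ n) (hn : 0 < n)
    (hb : 0 ≤ b) (hc : 0 ≤ c) (hC₂ : b + c ≤ C₂) (ha : C₂ ≤ a) :
    (n - m) * C₂ + (m - k) * b + 1/2 * (n * (n - 1) - k * (k - 1)) * c
      ≤ n * ((m + n - 2 * k) * a) := by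
  have hkm : 0 ≤ (m : ℝ) - k := sub_nonneg.2 (by exact_mod_cast hkm)
  have hmn : 0 ≤ (n : ℝ) - m := sub_nonneg.2 (by exact_mod_cast hmn)
  have hn₁ : 0 ≤ (n : ℝ) - 1 := sub_nonneg.2 (by exact_mod_cast hn)
  have hn₀ : 0 ≤ (n : ℝ) := n.cast_nonneg
  have hslack : 0 ≤ a - b - c := by linarith
  linarith [mul_nonneg hmn (sub_nonneg.2 ha),
    mul_nonneg (mul_nonneg hn₁ hmn) (by linarith : 0 ≤ a - c),
    mul_nonneg (mul_nonneg hkm hn₀) hslack, mul_nonneg (mul_nonneg hkm hn₁) hb,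
    mul_nonneg (mul_nonneg hkm hn₀) hb, mul_nonneg hc (natCast_sub_mul_sub_sub_one_nonneg k n),
    mul_nonneg hc hkm, mul_nonneg (mul_nonneg hc hkm) hn₀]

-- For `n = 0` the left-hand side is `0⁻¹ * _ = 0`, whence no hypothesis on `G` in that case.
lemma inv_rpow_mul_inf'_le_inf' {ι κ : Type*} [Fintype ι] [Nonempty ι] [Fintype κ] [Nonempty κ]
    {p : ℝ} (hp : 0 < p) (n : ℕ) (G : ι → ℝ) (A : κ → ℝ) (hA : ∀ j, 0 ≤ A j)
    (hGA : 0 < n → ∀ j, ∃ i, 0 ≤ G i ∧ G i ≤ n * A j) :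
    ((n : ℝ) ^ (1 / p))⁻¹ * univ.inf' univ_nonempty (fun i => G i ^ (1 / p))
      ≤ univ.inf' univ_nonempty (fun j => A j ^ (1 / p)) := by
  refine le_inf' _ _ fun j _ => ?_
  rcases n.eq_zero_or_pos with rfl | hn
  · rw [Nat.cast_zero, Real.zero_rpow (one_div_pos.2 hp).ne', inv_zero, zero_mul]
    exact Real.rpow_nonneg (hA j) _
  obtain ⟨i, hG, hGA⟩ := hGA hn j
  have hn : (0 : ℝ) < n := by exact_mod_cast hn
  calc ((n : ℝ) ^ (1 / p))⁻¹ * univ.inf' univ_nonempty (fun i => G i ^ (1 / p))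
      ≤ ((n : ℝ) ^ (1 / p))⁻¹ * G i ^ (1 / p) := by gcongr; exact inf'_le _ (mem_univ i)
    _ = (G i / n) ^ (1 / p) := by rw [Real.div_rpow hG hn.le, inv_mul_eq_div]
    _ ≤ A j ^ (1 / p) :=
      Real.rpow_le_rpow (by positivity) ((div_le_iff₀' hn).2 hGA) (one_div_pos.2 hp).le

section Costs

variable {X Y : Type*}

def padEdges (y₀ : Y) {m n : ℕ} (e : Fin m → Fin m → Y) (i i' : Fin n) : Y :=
  if h : (i : ℕ) < m ∧ (i' : ℕ) < m then e ⟨i, h.1⟩ ⟨i', h.2⟩ else y₀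

lemma padEdges_castLE (y₀ : Y) {m n : ℕ} (hmn : m ≤ n) (e : Fin m → Fin m → Y) (i i' : Fin m) :
    padEdges y₀ e (Fin.castLE hmn i) (Fin.castLE hmn i') = e i i' := by
  simp [padEdges]

lemma padEdges_self {y₀ : Y} {m n : ℕ} {e : Fin m → Fin m → Y} (he : IsGraph y₀ e) (i : Fin n) :
    padEdges y₀ e i i = y₀ := by
  unfold padEdges
  split_ifs <;> simp [he.2]

variable [PseudoMetricSpace X] [PseudoMetricSpace Y]

noncomputable def gttCost (y₀ : Y) (p C : ℝ) {m n : ℕ} (hmn : m ≤ n)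
    (v : Fin m → X) (e : Fin m → Fin m → Y)
    (w : Fin n → X) (f : Fin n → Fin n → Y)
    (I : Finset (Fin m)) (π : Equiv.Perm (Fin n)) : ℝ :=
  ((m : ℝ) + n - 2 * #I) * C ^ p
    + ∑ i ∈ I, dist (v i) (w (π (Fin.castLE hmn i))) ^ p
    + (1/2) * ∑ i ∈ I, ∑ i' ∈ I,
        dist (e i i') (f (π (Fin.castLE hmn i)) (π (Fin.castLE hmn i'))) ^ p
    + (1/2) * ∑ q ∈ (univ : Finset (Fin m × Fin m)) \ I ×ˢ I, dist (e q.1 q.2) y₀ ^ p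
    + (1/2) * ∑ q ∈ (univ : Finset (Fin n × Fin n)) \
        ((I.image fun i => π (Fin.castLE hmn i)) ×ˢ (I.image fun i => π (Fin.castLE hmn i))),
        dist y₀ (f q.1 q.2) ^ p

lemma dGTT_eq (y₀ : Y) (p C : ℝ) {m n : ℕ} (hmn : m ≤ n)
    (v : Fin m → X) (e : Fin m → Fin m → Y) (w : Fin n → X) (f : Fin n → Fin n → Y) :
    dGTT y₀ p C hmn v e w f = univ.inf' univ_nonempty
      fun Iπ : Finset (Fin m) × Equiv.Perm (Fin n) =>
        gttCost y₀ p C hmn v e w f Iπ.1 Iπ.2 ^ (1 / p) := rfl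

noncomputable def gospa1Cost (p C₁ CY : ℝ) {m n : ℕ} (hmn : m ≤ n)
    (v : Fin m → X) (e : Fin m → Fin m → Y)
    (w : Fin n → X) (f : Fin n → Fin n → Y) (π : Equiv.Perm (Fin n)) : ℝ :=
  ((n : ℝ) - m) * C₁ ^ p
    + ∑ i : Fin m, dist (v i) (w (π (Fin.castLE hmn i))) ^ p
    + (1/2) * ((n : ℝ) - 1)⁻¹ *
        ∑ i : Fin m, ((∑ i' : Fin m,
            dist (e i i') (f (π (Fin.castLE hmn i)) (π (Fin.castLE hmn i'))) ^ p)
          + ((n : ℝ) - m) * CY ^ p)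

lemma dGOSPA1_eq (p C₁ CY : ℝ) {m n : ℕ} (hmn : m ≤ n)
    (v : Fin m → X) (e : Fin m → Fin m → Y) (w : Fin n → X) (f : Fin n → Fin n → Y) :
    dGOSPA1 p C₁ CY hmn v e w f = ((n : ℝ) ^ (1 / p))⁻¹
      * univ.inf' univ_nonempty fun π => gospa1Cost p C₁ CY hmn v e w f π ^ (1 / p) := rfl

noncomputable def gospa2Cost (y₀ : Y) (p C₂ : ℝ) {m n : ℕ} (hmn : m ≤ n)
    (v : Fin m → X) (e : Fin m → Fin m → Y)
    (w : Fin n → X) (f : Fin n → Fin n → Y) (π : Equiv.Perm (Fin n)) : ℝ :=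
  ((n : ℝ) - m) * C₂ ^ p
    + ∑ i : Fin m, dist (v i) (w (π (Fin.castLE hmn i))) ^ p
    + (1/2) * ((n : ℝ) - 1)⁻¹ *
        ∑ i : Fin n, ∑ i' : Fin n, dist (padEdges y₀ e i i') (f (π i) (π i')) ^ p

lemma dGOSPA2_eq (y₀ : Y) (p C₂ : ℝ) {m n : ℕ} (hmn : m ≤ n)
    (v : Fin m → X) (e : Fin m → Fin m → Y) (w : Fin n → X) (f : Fin n → Fin n → Y) :
    dGOSPA2 y₀ p C₂ hmn v e w f = ((n : ℝ) ^ (1 / p))⁻¹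
      * univ.inf' univ_nonempty fun π => gospa2Cost y₀ p C₂ hmn v e w f π ^ (1 / p) := by
  unfold dGOSPA2 gospa2Cost padEdges
  congr! 9 with π i i'
  split_ifs <;> rfl

end Costs

section Comparison

variable {X Y : Type*} [PseudoMetricSpace X] [PseudoMetricSpace Y] {m n : ℕ} (hmn : m ≤ n)
  (v : Fin m → X) (e : Fin m → Fin m → Y) (w : Fin n → X) (f : Fin n → Fin n → Y)
  (I : Finset (Fin m)) (π : Equiv.Perm (Fin n))

lemma gttCost_nonneg (y₀ : Y) {p C : ℝ} (hC : 0 ≤ C ^ p) : 0 ≤ gttCost y₀ p C hmn v e w f I π := by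
  have hI : (#I : ℝ) ≤ m := by exact_mod_cast (card_le_univ I).trans_eq (Fintype.card_fin m)
  have hmn' : (m : ℝ) ≤ n := by exact_mod_cast hmn
  have hk : (0 : ℝ) ≤ m + n - 2 * #I := by linarith
  unfold gttCost
  positivity

lemma add_le_mul_gttCost (y₀ : Y) (p C : ℝ) (hn : 0 < n) :
    n * (((m : ℝ) + n - 2 * #I) * C ^ p) + (∑ i ∈ I, dist (v i) (w (π (Fin.castLE hmn i))) ^ p
      + 1/2 * ∑ i ∈ I, ∑ i' ∈ I,
        dist (e i i') (f (π (Fin.castLE hmn i)) (π (Fin.castLE hmn i'))) ^ p)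
      ≤ n * gttCost y₀ p C hmn v e w f I π := by
  have hn : (1 : ℝ) ≤ n := Nat.one_le_cast.2 hn
  have hsplit : ∀ {a b c d g : ℝ}, 0 ≤ b → 0 ≤ c → 0 ≤ d → 0 ≤ g →
      n * a + (b + c) ≤ n * (a + b + c + d + g) := fun hb hc hd hg => by nlinarith
  exact hsplit (by positivity) (by positivity) (by positivity) (by positivity)

lemma gospa1Cost_le (C₁ : ℝ) {p CY : ℝ} (hCY : 0 ≤ CY ^ p) :
    gospa1Cost p C₁ CY hmn v e w f π
      ≤ ((n : ℝ) - m) * C₁ ^ p + ∑ i : Fin m, dist (v i) (w (π (Fin.castLE hmn i))) ^ p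
        + 1/2 * (∑ i : Fin m, ∑ i' : Fin m,
            dist (e i i') (f (π (Fin.castLE hmn i)) (π (Fin.castLE hmn i'))) ^ p
          + m * (((n : ℝ) - m) * CY ^ p)) := by
  have hnm : (0 : ℝ) ≤ n - m := sub_nonneg.2 (by exact_mod_cast hmn)
  unfold gospa1Cost
  rw [sum_add_distrib, sum_const, card_univ, Fintype.card_fin, nsmul_eq_mul, mul_assoc (1/2)]
  gcongr
  exact mul_le_of_le_one_left (by positivity) (natCast_sub_one_inv_le_one n)

lemma gospa1Cost_nonneg {p C₁ CY : ℝ} (hC₁ : 0 ≤ C₁ ^ p) (hCY : 0 ≤ CY ^ p) (hn : 0 < n) :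
    0 ≤ gospa1Cost p C₁ CY hmn v e w f π := by
  have hnm : (0 : ℝ) ≤ n - m := sub_nonneg.2 (by exact_mod_cast hmn)
  have hinv : (0 : ℝ) ≤ ((n : ℝ) - 1)⁻¹ := inv_nonneg.2 (sub_nonneg.2 (Nat.one_le_cast.2 hn))
  unfold gospa1Cost
  positivity

lemma gospa1Cost_le_mul_gttCost (y₀ : Y) {p C C₁ CX CY : ℝ} (hCX : 0 ≤ CX ^ p)
    (hCY : 0 ≤ CY ^ p) (hdX : ∀ x x' : X, dist x x' ^ p ≤ CX ^ p)
    (hdY : ∀ y y' : Y, dist y y' ^ p ≤ CY ^ p) (hC₁ : CX ^ p + 1/2 * CY ^ p ≤ C₁ ^ p)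
    (hCC : C₁ ^ p ≤ C ^ p) (hn : 0 < n) :
    gospa1Cost p C₁ CY hmn v e w f π ≤ n * gttCost y₀ p C hmn v e w f I π := by
  have hX := sum_le_sum_add_card_sub_mul (subset_univ I) fun i _ =>
    hdX (v i) (w (π (Fin.castLE hmn i)))
  have hY := sum_sum_le_sum_sum_add (subset_univ I) fun i _ i' _ =>
    hdY (e i i') (f (π (Fin.castLE hmn i)) (π (Fin.castLE hmn i')))
  simp only [card_univ, Fintype.card_fin] at hX hY
  have hpen := gospa1_penalty_le ((card_le_univ I).trans_eq (Fintype.card_fin m)) hmn hn hCX hCY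
    hC₁ hCC
  linarith [gospa1Cost_le hmn v e w f π C₁ hCY, add_le_mul_gttCost hmn v e w f I π y₀ p C hn]

lemma sum_sum_dist_padEdges_le {y₀ : Y} {p CY : ℝ} (hp : 0 < p) (he : IsGraph y₀ e)
    (hf : IsGraph y₀ f) (hdY : ∀ y y' : Y, dist y y' ^ p ≤ CY ^ p) :
    ∑ i : Fin n, ∑ i' : Fin n, dist (padEdges y₀ e i i') (f (π i) (π i')) ^ p
      ≤ ∑ i ∈ I, ∑ i' ∈ I,
          dist (e i i') (f (π (Fin.castLE hmn i)) (π (Fin.castLE hmn i'))) ^ p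
        + ((n : ℝ) * (n - 1) - #I * (#I - 1)) * CY ^ p := by
  have h := sum_sum_le_sum_sum_add_of_diag (subset_univ (I.map (Fin.castLEEmb hmn)))
    (g := fun i i' => dist (padEdges y₀ e i i') (f (π i) (π i')) ^ p)
    (fun i _ => by simp [padEdges_self he, hf.2, Real.zero_rpow hp.ne'])
    (fun i _ i' _ => hdY _ _)
  simpa [sum_map, padEdges_castLE] using h

lemma gospa2Cost_le (y₀ : Y) (p C₂ : ℝ) :
    gospa2Cost y₀ p C₂ hmn v e w f π
      ≤ ((n : ℝ) - m) * C₂ ^ p + ∑ i : Fin m, dist (v i) (w (π (Fin.castLE hmn i))) ^ p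
        + 1/2 * ∑ i : Fin n, ∑ i' : Fin n, dist (padEdges y₀ e i i') (f (π i) (π i')) ^ p := by
  unfold gospa2Cost
  rw [mul_assoc (1/2)]
  gcongr
  exact mul_le_of_le_one_left (by positivity) (natCast_sub_one_inv_le_one n)

lemma gospa2Cost_nonneg {y₀ : Y} {p C₂ : ℝ} (hC₂ : 0 ≤ C₂ ^ p) (hn : 0 < n) :
    0 ≤ gospa2Cost y₀ p C₂ hmn v e w f π := by
  have hnm : (0 : ℝ) ≤ n - m := sub_nonneg.2 (by exact_mod_cast hmn)
  have hinv : (0 : ℝ) ≤ ((n : ℝ) - 1)⁻¹ := inv_nonneg.2 (sub_nonneg.2 (Nat.one_le_cast.2 hn))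
  unfold gospa2Cost
  positivity

lemma gospa2Cost_le_mul_gttCost (y₀ : Y) {p C C₂ CX CY : ℝ} (hp : 0 < p) (hCX : 0 ≤ CX ^ p)
    (hCY : 0 ≤ CY ^ p) (hdX : ∀ x x' : X, dist x x' ^ p ≤ CX ^ p)
    (hdY : ∀ y y' : Y, dist y y' ^ p ≤ CY ^ p) (hC₂ : CX ^ p + CY ^ p ≤ C₂ ^ p)
    (hCC : C₂ ^ p ≤ C ^ p) (he : IsGraph y₀ e) (hf : IsGraph y₀ f) (hn : 0 < n) :
    gospa2Cost y₀ p C₂ hmn v e w f π ≤ n * gttCost y₀ p C hmn v e w f I π := by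
  have hX := sum_le_sum_add_card_sub_mul (subset_univ I) fun i _ =>
    hdX (v i) (w (π (Fin.castLE hmn i)))
  simp only [card_univ, Fintype.card_fin] at hX
  have hpen := gospa2_penalty_le ((card_le_univ I).trans_eq (Fintype.card_fin m)) hmn hn hCX hCY
    hC₂ hCC
  linarith [gospa2Cost_le hmn v e w f π y₀ p C₂,
    sum_sum_dist_padEdges_le hmn e f I π hp he hf hdY, add_le_mul_gttCost hmn v e w f I π y₀ p C hn]

end Comparison

section Distances

variable {X Y : Type*} [PseudoMetricSpace X] [PseudoMetricSpace Y] {m n : ℕ}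

theorem dGOSPA1_le_dGTT (y₀ : Y) {p C C₁ CX CY : ℝ} (hp : 0 < p) (hCX0 : 0 ≤ CX) (hCY0 : 0 ≤ CY)
    (hdX : ∀ x x' : X, dist x x' ≤ CX) (hdY : ∀ y y' : Y, dist y y' ≤ CY)
    (hC₁ : CX ^ p + 1/2 * CY ^ p ≤ C₁ ^ p) (hCC : C₁ ^ p ≤ C ^ p) (hmn : m ≤ n)
    (v : Fin m → X) (e : Fin m → Fin m → Y) (w : Fin n → X) (f : Fin n → Fin n → Y) :
    dGOSPA1 p C₁ CY hmn v e w f ≤ dGTT y₀ p C hmn v e w f := by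
  have hCX := Real.rpow_nonneg hCX0 p
  have hCY := Real.rpow_nonneg hCY0 p
  rw [dGOSPA1_eq, dGTT_eq]
  exact inv_rpow_mul_inf'_le_inf' hp n _ _
    (fun Iπ => gttCost_nonneg hmn v e w f Iπ.1 Iπ.2 y₀ (by linarith)) fun hn ⟨I, π⟩ =>
      ⟨π, gospa1Cost_nonneg hmn v e w f π (by linarith) hCY hn,
        gospa1Cost_le_mul_gttCost hmn v e w f I π y₀ hCX hCY
          (fun x x' => Real.rpow_le_rpow dist_nonneg (hdX x x') hp.le)
          (fun y y' => Real.rpow_le_rpow dist_nonneg (hdY y y') hp.le) hC₁ hCC hn⟩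

theorem dGOSPA2_le_dGTT (y₀ : Y) {p C C₂ CX CY : ℝ} (hp : 0 < p) (hCX0 : 0 ≤ CX) (hCY0 : 0 ≤ CY)
    (hdX : ∀ x x' : X, dist x x' ≤ CX) (hdY : ∀ y y' : Y, dist y y' ≤ CY)
    (hC₂ : CX ^ p + CY ^ p ≤ C₂ ^ p) (hCC : C₂ ^ p ≤ C ^ p) (hmn : m ≤ n)
    (v : Fin m → X) (e : Fin m → Fin m → Y) (w : Fin n → X) (f : Fin n → Fin n → Y)
    (he : IsGraph y₀ e) (hf : IsGraph y₀ f) :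
    dGOSPA2 y₀ p C₂ hmn v e w f ≤ dGTT y₀ p C hmn v e w f := by
  have hCX := Real.rpow_nonneg hCX0 p
  have hCY := Real.rpow_nonneg hCY0 p
  rw [dGOSPA2_eq, dGTT_eq]
  exact inv_rpow_mul_inf'_le_inf' hp n _ _
    (fun Iπ => gttCost_nonneg hmn v e w f Iπ.1 Iπ.2 y₀ (by linarith)) fun hn ⟨I, π⟩ =>
      ⟨π, gospa2Cost_nonneg hmn v e w f π (by linarith) hn,
        gospa2Cost_le_mul_gttCost hmn v e w f I π y₀ hp hCX hCY
          (fun x x' => Real.rpow_le_rpow dist_nonneg (hdX x x') hp.le)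
          (fun y y' => Real.rpow_le_rpow dist_nonneg (hdY y y') hp.le) hC₂ hCC he hf hn⟩

end Distances

theorem dGOSPA_le_dGTT_general
    {X Y : Type*} [PseudoMetricSpace X] [PseudoMetricSpace Y]
    (y₀ : Y) (p C C₁ C₂ CX CY : ℝ) (hp : 1 ≤ p)
    (hCX0 : 0 ≤ CX) (hCY0 : 0 ≤ CY)
    (hdX : ∀ x x' : X, dist x x' ≤ CX) (hdY : ∀ y y' : Y, dist y y' ≤ CY)
    (hC₁ : CX ^ p + (1/2) * CY ^ p ≤ C₁ ^ p)
    (hC₂ : CX ^ p + CY ^ p ≤ C₂ ^ p)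
    {m n : ℕ}
    (v : Fin m → X) (e : Fin m → Fin m → Y)
    (w : Fin n → X) (f : Fin n → Fin n → Y)
    (he : IsGraph y₀ e) (hf : IsGraph y₀ f) :
    (C₁ ^ p ≤ C ^ p → dGOSPA1' p C₁ CY v e w f ≤ dGTT' y₀ p C v e w f) ∧
    (C₂ ^ p ≤ C ^ p → dGOSPA2' y₀ p C₂ v e w f ≤ dGTT' y₀ p C v e w f) := by
  have hp : 0 < p := one_pos.trans_le hp
  refine ⟨fun hCC => ?_, fun hCC => ?_⟩
  · unfold dGOSPA1' dGTT'
    split_ifs with hmn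
    · exact dGOSPA1_le_dGTT y₀ hp hCX0 hCY0 hdX hdY hC₁ hCC hmn v e w f
    · exact dGOSPA1_le_dGTT y₀ hp hCX0 hCY0 hdX hdY hC₁ hCC _ w f v e
  · unfold dGOSPA2' dGTT'
    split_ifs with hmn
    · exact dGOSPA2_le_dGTT y₀ hp hCX0 hCY0 hdX hdY hC₂ hCC hmn v e w f he hf
    · exact dGOSPA2_le_dGTT y₀ hp hCX0 hCY0 hdX hdY hC₂ hCC _ w f v e hf he

/-- Proposition: the GTT distance dominates the GOSPA distances.
If the GTT penalty satisfies `C^p ≥ C_i^p` (for the GOSPA penalty `C_i` with its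
defining lower bound), then `d_{G,A} ≥ d_{G,R_i}` for `i = 1, 2` and any two attributed
simple graphs. -/
theorem dGOSPA_le_dGTT
    {X Y : Type*} [PseudoMetricSpace X] [PseudoMetricSpace Y]
    (y₀ : Y) (p C C₁ C₂ CX CY : ℝ) (hp : 1 ≤ p) (hC : 0 < C)
    (hCX0 : 0 ≤ CX) (hCY0 : 0 ≤ CY)
    (hdX : ∀ x x' : X, dist x x' ≤ CX) (hdY : ∀ y y' : Y, dist y y' ≤ CY)
    (hC₁ : CX ^ p + (1/2) * CY ^ p ≤ C₁ ^ p)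
    (hC₂ : CX ^ p + CY ^ p ≤ C₂ ^ p)
    {m n : ℕ}
    (v : Fin m → X) (e : Fin m → Fin m → Y)
    (w : Fin n → X) (f : Fin n → Fin n → Y)
    (he : IsGraph y₀ e) (hf : IsGraph y₀ f) :
    (C₁ ^ p ≤ C ^ p → dGOSPA1' p C₁ CY v e w f ≤ dGTT' y₀ p C v e w f) ∧
    (C₂ ^ p ≤ C ^ p → dGOSPA2' y₀ p C₂ v e w f ≤ dGTT' y₀ p C v e w f) :=
  dGOSPA_le_dGTT_general y₀ p C C₁ C₂ CX CY hp hCX0 hCY0 hdX hdY hC₁ hC₂ v e w f he hf
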